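/- If a real symmetric matrix A ∈ M_q(ℝ) with q ≥ 2 is of strict negative type, then the Hadamard exponential e^{∘(−A)} = [e^{−A_{μν}}]_{μ,ν=1}^q is positive definite. -/

import Mathlib

/-!
Fix a base index `o` and put `B i j = A i o + A o j - A i j - A o o`. Writing
`d = x - (∑ x) • e_o`, which sums to zero, one has `xᵀ B x = -dᵀ A d`, so strict negative type
makes `B` positive semidefinite and positive definite on sum-zero vectors. By the Schur product
theorem every Hadamard power of `B` is positive semidefinite, hence so is each term of
`e^{∘B} = ∑ₖ B^{∘k} / k!`, and already the first two terms `J + B` (with `J` the all-ones matrix)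
are positive definite. Finally `e^{-A i j} = g i * e^{B i j} * g j` with
`g i = e^{A o o / 2 - A i o}`, a congruence by an invertible diagonal matrix.
-/

open Matrix Nat
open scoped ComplexOrder

namespace Matrix

variable {ι : Type*}

def IsStrictNegType [Fintype ι] (A : Matrix ι ι ℝ) : Prop :=
  ∀ c : ι → ℝ, c ≠ 0 → ∑ i, c i = 0 → c ⬝ᵥ A *ᵥ c < 0

def schoenbergKernel (A : Matrix ι ι ℝ) (o : ι) : Matrix ι ι ℝ :=
  of fun i j => A i o + A o j - A i j - A o o

theorem IsSymm.isHermitian_schoenbergKernel {A : Matrix ι ι ℝ} (hA : A.IsSymm) (o : ι) :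
    (schoenbergKernel A o).IsHermitian := by
  ext i j
  simp only [schoenbergKernel, conjTranspose_apply, of_apply, star_trivial, hA.apply i j,
    hA.apply o j, hA.apply i o]
  ring

theorem IsSymm.map_exp_neg_eq_diagonal_mul_mul_diagonal [Fintype ι] [DecidableEq ι]
    {A : Matrix ι ι ℝ} (hA : A.IsSymm) (o : ι) :
    A.map (fun a => Real.exp (-a)) =
      diagonal (fun i => Real.exp (A o o / 2 - A i o)) * (schoenbergKernel A o).map Real.exp *
        diagonal (fun i => Real.exp (A o o / 2 - A i o)) := by
  ext i j
  simp only [map_apply, mul_diagonal, diagonal_mul, schoenbergKernel, of_apply, ← Real.exp_add,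
    hA.apply j o]
  ring_nf

variable [Fintype ι]

theorem PosSemidef.map_pow {𝕜 : Type*} [RCLike 𝕜] {B : Matrix ι ι 𝕜} (hB : B.PosSemidef)
    (k : ℕ) : (B.map (· ^ k)).PosSemidef := by
  induction k with
  | zero =>
    convert posSemidef_vecMulVec_self_star (1 : ι → 𝕜) using 1
    ext i j
    simp [vecMulVec_apply]
  | succ k ih =>
    convert ih.hadamard hB using 1
    ext i j
    simp [pow_succ]

theorem hasSum_dotProduct_map_exp_mulVec (B : Matrix ι ι ℝ) (x : ι → ℝ) :
    HasSum (fun k : ℕ => x ⬝ᵥ B.map (· ^ k) *ᵥ x / k !) (x ⬝ᵥ B.map Real.exp *ᵥ x) := by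
  simp only [dotProduct, mulVec, map_apply, Finset.sum_div, Finset.mul_sum]
  refine hasSum_sum fun i _ => hasSum_sum fun j _ => ?_
  have h := (NormedSpace.expSeries_div_hasSum_exp (B i j)).mul_left (x i * x j)
  rw [← Real.exp_eq_exp_ℝ] at h
  rw [show x i * (Real.exp (B i j) * x j) = x i * x j * Real.exp (B i j) by ring]
  exact h.congr_fun fun k => by ring

theorem dotProduct_map_pow_zero_mulVec (B : Matrix ι ι ℝ) (x : ι → ℝ) :
    x ⬝ᵥ B.map (· ^ 0) *ᵥ x = (∑ i, x i) ^ 2 := by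
  simp [dotProduct, mulVec, sq, Finset.mul_sum, mul_comm]

theorem PosSemidef.posDef_map_exp {B : Matrix ι ι ℝ} (hB : B.PosSemidef)
    (hpos : ∀ x : ι → ℝ, x ≠ 0 → ∑ i, x i = 0 → 0 < x ⬝ᵥ B *ᵥ x) : (B.map Real.exp).PosDef := by
  refine .of_dotProduct_mulVec_pos (hB.isHermitian.map _ fun _ => rfl) fun x hx => ?_
  have hterm (k : ℕ) : 0 ≤ x ⬝ᵥ B.map (· ^ k) *ᵥ x / k ! := by
    have := (hB.map_pow k).dotProduct_mulVec_nonneg x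
    rw [star_trivial] at this
    positivity
  have hle := sum_le_hasSum (Finset.range 2) (fun k _ => hterm k)
    (hasSum_dotProduct_map_exp_mulVec B x)
  have hpow_one : B.map (· ^ 1) = B := by ext; simp
  simp only [Finset.sum_range_succ, Finset.sum_range_zero, dotProduct_map_pow_zero_mulVec,
    hpow_one, factorial_zero, factorial_one, cast_one, div_one, zero_add] at hle
  have hBx := hB.dotProduct_mulVec_nonneg x
  rw [star_trivial] at hBx ⊢
  by_cases hsum : ∑ i, x i = 0
  · have := hpos x hx hsum
    rw [hsum] at hle
    linarith
  · have : 0 < (∑ i, x i) ^ 2 := by positivity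
    linarith

theorem schoenbergKernel_mulVec (A : Matrix ι ι ℝ) (o : ι) (x : ι → ℝ) :
    schoenbergKernel A o *ᵥ x =
      (∑ i, x i) • A.col o + (A o ⬝ᵥ x) • 1 - A *ᵥ x - ((∑ i, x i) * A o o) • 1 := by
  ext i
  simp only [schoenbergKernel, mulVec, dotProduct, of_apply, add_mul, sub_mul,
    Finset.sum_add_distrib, Finset.sum_sub_distrib, ← Finset.mul_sum, Pi.add_apply,
    Pi.sub_apply, Pi.smul_apply, col_apply, Pi.one_apply, smul_eq_mul, mul_one]
  ring

theorem dotProduct_schoenbergKernel_mulVec [DecidableEq ι] (A : Matrix ι ι ℝ) (o : ι)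
    (x : ι → ℝ) :
    x ⬝ᵥ schoenbergKernel A o *ᵥ x =
      -((x - (∑ i, x i) • Pi.single o 1) ⬝ᵥ A *ᵥ (x - (∑ i, x i) • Pi.single o 1)) := by
  have hrow : (A *ᵥ x) o = A o ⬝ᵥ x := rfl
  simp only [schoenbergKernel_mulVec, mulVec_sub, mulVec_smul, mulVec_single_one,
    sub_dotProduct, dotProduct_sub, dotProduct_add, smul_dotProduct, dotProduct_smul,
    single_one_dotProduct, smul_eq_mul, dotProduct_one, col_apply, hrow]
  ring

namespace IsStrictNegType

variable {A : Matrix ι ι ℝ} (hA : A.IsStrictNegType) (o : ι)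
include hA

theorem dotProduct_schoenbergKernel_mulVec_pos {x : ι → ℝ} (hx : x ≠ 0)
    (hsum : ∑ i, x i = 0) : 0 < x ⬝ᵥ schoenbergKernel A o *ᵥ x := by
  classical
  rw [dotProduct_schoenbergKernel_mulVec, hsum, zero_smul, sub_zero, neg_pos]
  exact hA x hx hsum

theorem posSemidef_schoenbergKernel (hsymm : A.IsSymm) : (schoenbergKernel A o).PosSemidef := by
  classical
  refine .of_dotProduct_mulVec_nonneg (hsymm.isHermitian_schoenbergKernel o) fun x => ?_
  rw [star_trivial, dotProduct_schoenbergKernel_mulVec, neg_nonneg]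
  set d := x - (∑ i, x i) • Pi.single o (1 : ℝ)
  obtain hd | hd := eq_or_ne d 0
  · simp [hd]
  · refine (hA d hd ?_).le
    simp [d, Finset.sum_sub_distrib, ← Finset.mul_sum]

omit o in
theorem posDef_map_exp_neg (hsymm : A.IsSymm) : (A.map fun a => Real.exp (-a)).PosDef := by
  classical
  obtain hι | ⟨⟨o⟩⟩ := isEmpty_or_nonempty ι
  · exact ⟨Subsingleton.elim _ _, fun x hx => absurd (Subsingleton.elim x 0) hx⟩
  have hK := (hA.posSemidef_schoenbergKernel o hsymm).posDef_map_exp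
    fun x hx hsum => hA.dotProduct_schoenbergKernel_mulVec_pos o hx hsum
  have hD : IsUnit (diagonal fun i => Real.exp (A o o / 2 - A i o)) :=
    isUnit_diagonal.mpr (Pi.isUnit_iff.mpr fun i => (Real.exp_pos _).ne'.isUnit)
  simpa [hsymm.map_exp_neg_eq_diagonal_mul_mul_diagonal o, diagonal_conjTranspose] using
    hK.conjTranspose_mul_mul_same (mulVec_injective_of_isUnit hD)

end IsStrictNegType

end Matrix

theorem hadamard_exp_of_strict_negative_type_general {q : ℕ}
    (A : Matrix (Fin q) (Fin q) ℝ) (hsym : A.IsSymm)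
    (hneg : ∀ c : Fin q → ℝ, c ≠ 0 → ∑ μ, c μ = 0 → c ⬝ᵥ A.mulVec c < 0) :
    (Matrix.of fun μ ν : Fin q => Real.exp (-(A μ ν))).PosDef :=
  IsStrictNegType.posDef_map_exp_neg hneg hsym

/-- for a real symmetric matrix `A` (with `q ≥ 2`) of strict negative type,
the Hadamard exponential `e^{∘(−A)}` is positive definite. -/
theorem hadamard_exp_of_strict_negative_type {q : ℕ} (hq : 2 ≤ q)
    (A : Matrix (Fin q) (Fin q) ℝ) (hsym : A.IsSymm)
    (hneg : ∀ c : Fin q → ℝ, c ≠ 0 → ∑ μ, c μ = 0 → c ⬝ᵥ A.mulVec c < 0) :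
    (Matrix.of fun μ ν : Fin q => Real.exp (-(A μ ν))).PosDef :=
  hadamard_exp_of_strict_negative_type_general A hsym hneg
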